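/- Let I be a closed ideal of a Banach algebra A having a bounded approximate identity (e_α) that is quasi-central for A (i.e., ‖a e_α − e_α a‖ → 0 for all a ∈ A). If A is approximately weakly amenable, then I is approximately weakly amenable. -/

import Mathlib

open ContinuousLinearMap Filter Topology

open ContinuousLinearMap Filter Topology

/-- A Banach `A`-bimodule: a complete normed `ℂ`-space with commuting continuous
left and right `A`-actions, jointly bounded and bilinear. -/
structure BBimod (A : Type) [NonUnitalNormedRing A] [NormedSpace ℂ A] where
  carrier : Type
  [grp : NormedAddCommGroup carrier]
  [mod : NormedSpace ℂ carrier]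
  [complete : CompleteSpace carrier]
  lsmul : A → carrier →L[ℂ] carrier
  rsmul : A → carrier →L[ℂ] carrier
  lsmul_add : ∀ a b, lsmul (a + b) = lsmul a + lsmul b
  rsmul_add : ∀ a b, rsmul (a + b) = rsmul a + rsmul b
  lsmul_smul : ∀ (c : ℂ) (a), lsmul (c • a) = c • lsmul a
  rsmul_smul : ∀ (c : ℂ) (a), rsmul (c • a) = c • rsmul a
  lsmul_mul : ∀ a b, lsmul (a * b) = (lsmul a).comp (lsmul b)
  rsmul_mul : ∀ a b, rsmul (a * b) = (rsmul b).comp (rsmul a)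
  lsmul_rsmul : ∀ a b, (lsmul a).comp (rsmul b) = (rsmul b).comp (lsmul a)
  bound : ∃ C : ℝ, ∀ a, ‖lsmul a‖ ≤ C * ‖a‖ ∧ ‖rsmul a‖ ≤ C * ‖a‖

attribute [instance] BBimod.grp BBimod.mod BBimod.complete

variable {A : Type} [NonUnitalNormedRing A] [NormedSpace ℂ A]

/-- The dual of a Banach bimodule, with the canonical dual actions
`⟨u, Λ·a⟩ = ⟨a·u, Λ⟩` and `⟨u, a·Λ⟩ = ⟨u·a, Λ⟩`. -/
noncomputable def BBimod.dual (M : BBimod A) : BBimod A where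
  carrier := M.carrier →L[ℂ] ℂ
  lsmul a := (compL ℂ M.carrier M.carrier ℂ).flip (M.rsmul a)
  rsmul a := (compL ℂ M.carrier M.carrier ℂ).flip (M.lsmul a)
  lsmul_add a b := by ext Λ x; simp [M.rsmul_add]
  rsmul_add a b := by ext Λ x; simp [M.lsmul_add]
  lsmul_smul c a := by ext Λ x; simp [M.rsmul_smul]
  rsmul_smul c a := by ext Λ x; simp [M.lsmul_smul]
  lsmul_mul a b := by ext Λ x; simp [M.rsmul_mul]
  rsmul_mul a b := by ext Λ x; simp [M.lsmul_mul]
  lsmul_rsmul a b := by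
    ext Λ x
    have h : M.lsmul b (M.rsmul a x) = M.rsmul a (M.lsmul b x) := by
      have := congrArg (fun T : M.carrier →L[ℂ] M.carrier => T x) (M.lsmul_rsmul b a)
      simpa using this
    simp [h]
  bound := by
    obtain ⟨C, hC⟩ := M.bound
    refine ⟨C, fun a => ⟨?_, ?_⟩⟩
    · refine opNorm_le_bound _ ?_ fun Λ => ?_
      · exact le_trans (norm_nonneg _) (hC a).2
      · calc ‖Λ.comp (M.rsmul a)‖ ≤ ‖Λ‖ * ‖M.rsmul a‖ := opNorm_comp_le _ _
          _ ≤ (C * ‖a‖) * ‖Λ‖ := by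
              rw [mul_comm]
              exact mul_le_mul_of_nonneg_right (hC a).2 (norm_nonneg _)
    · refine opNorm_le_bound _ ?_ fun Λ => ?_
      · exact le_trans (norm_nonneg _) (hC a).1
      · calc ‖Λ.comp (M.lsmul a)‖ ≤ ‖Λ‖ * ‖M.lsmul a‖ := opNorm_comp_le _ _
          _ ≤ (C * ‖a‖) * ‖Λ‖ := by
              rw [mul_comm]
              exact mul_le_mul_of_nonneg_right (hC a).1 (norm_nonneg _)

variable (A) [IsScalarTower ℂ A A] [SMulCommClass ℂ A A] [CompleteSpace A]

/-- `A` as a Banach bimodule over itself. -/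
noncomputable def BBimod.base : BBimod A where
  carrier := A
  lsmul a := ContinuousLinearMap.mul ℂ A a
  rsmul a := (ContinuousLinearMap.mul ℂ A).flip a
  lsmul_add a b := by ext x; simp [add_mul]
  rsmul_add a b := by ext x; simp [mul_add]
  lsmul_smul c a := by ext x; simp [smul_mul_assoc]
  rsmul_smul c a := by ext x; simp [mul_smul_comm]
  lsmul_mul a b := by ext x; simp [mul_assoc]
  rsmul_mul a b := by ext x; simp [mul_assoc]
  lsmul_rsmul a b := by ext x; simp [mul_assoc]
  bound := by
    refine ⟨1, fun a => ⟨?_, ?_⟩⟩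
    · simpa using ContinuousLinearMap.opNorm_mul_apply_le ℂ A a
    · refine le_trans (opNorm_le_bound _ (norm_nonneg a) fun x => ?_) (by simp)
      simpa [mul_comm] using norm_mul_le x a


/-- The `n`-th dual `A^(n)` of `A` as a Banach `A`-bimodule. -/
noncomputable def iterDual : ℕ → BBimod A
  | 0 => BBimod.base A
  | n + 1 => (iterDual n).dual

variable {A}

/-- `D` is a derivation from `A` into the Banach bimodule `M`. -/
def IsDerivation (M : BBimod A) (D : A →L[ℂ] M.carrier) : Prop :=
  ∀ a b : A, D (a * b) = M.lsmul a (D b) + M.rsmul b (D a)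

/-- `D` is an inner derivation. -/
def IsInner (M : BBimod A) (D : A →L[ℂ] M.carrier) : Prop :=
  ∃ x : M.carrier, ∀ a : A, D a = M.lsmul a x - M.rsmul a x

/-- `D` is approximately inner: there is a net `(x_i)` in `M` with
`D a = lim_i (a·x_i − x_i·a)` for every `a`. -/
def IsApproxInner (M : BBimod A) (D : A →L[ℂ] M.carrier) : Prop :=
  ∃ (ι : Type) (l : Filter ι) (x : ι → M.carrier), l.NeBot ∧
    ∀ a : A, Tendsto (fun i => M.lsmul a (x i) - M.rsmul a (x i)) l (𝓝 (D a))

variable (A)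

/-- `A` is weakly amenable. -/
def WeaklyAmenable : Prop :=
  ∀ D : A →L[ℂ] (iterDual A 1).carrier, IsDerivation (iterDual A 1) D → IsInner (iterDual A 1) D

/-- `A` is approximately `n`-weakly amenable. -/
def ApproxNWeaklyAmenable (n : ℕ) : Prop :=
  ∀ D : A →L[ℂ] (iterDual A n).carrier,
    IsDerivation (iterDual A n) D → IsApproxInner (iterDual A n) D

/-- `A` is `n`-weakly amenable. -/
def NWeaklyAmenable (n : ℕ) : Prop :=
  ∀ D : A →L[ℂ] (iterDual A n).carrier,
    IsDerivation (iterDual A n) D → IsInner (iterDual A n) D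

/-- `A` is approximately weakly amenable. -/
def ApproxWeaklyAmenable : Prop := ApproxNWeaklyAmenable A 1

/-- `A` is approximately amenable: every continuous derivation into the dual of a
Banach `A`-bimodule is approximately inner. -/
def ApproxAmenable : Prop :=
  ∀ (X : BBimod A) (D : A →L[ℂ] X.dual.carrier), IsDerivation X.dual D → IsApproxInner X.dual D
noncomputable instance NonUnitalSubalgebra.normedSpaceComplexOfNormed {A : Type}
    [NonUnitalNormedRing A] [NormedSpace ℂ A] (I : NonUnitalSubalgebra ℂ A) :
    NormedSpace ℂ I :=
  SubmoduleClass.toNormedSpace (R := ℂ) I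
variable (A : Type) [NonUnitalNormedRing A] [NormedSpace ℂ A]
  [IsScalarTower ℂ A A] [SMulCommClass ℂ A A] [CompleteSpace A]

/-!
A derivation `D : I → I*` extends to a derivation `D̃ : A → I*`, `D̃ a = w*-lim D (a eₖ)`: the
Leibniz rule for `D̃` comes from that of `D` by letting `eₘ` act on the left, and quasi-centrality
lets `D (eₘ a)` be replaced by `D (a eₘ)`. Likewise `Φ φ = w*-lim (b ↦ φ (eᵢ b))` defines a map
`Φ : I* → A*` with `Φ φ = φ` on `I`, which by quasi-centrality intertwines the right actions of `A`.
Hence `Φ ∘ D̃` is a derivation `A → A*` that agrees with `D` on `I`; it is approximately inner by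
hypothesis, and restricting the approximating net to `I` shows that `D` is approximately inner.
The weak* limits are taken along an ultrafilter finer than the net's filter, along which bounded
nets of scalars converge.
-/

section UltrafilterLimit

variable {ι 𝕜 E F G : Type*} [NontriviallyNormedField 𝕜]
  [NormedAddCommGroup E] [NormedSpace 𝕜 E] [NormedAddCommGroup F] [NormedSpace 𝕜 F]
  [NormedAddCommGroup G] [NormedSpace 𝕜 G]

theorem Ultrafilter.exists_tendsto_of_norm_le [ProperSpace G] (U : Ultrafilter ι) {f : ι → G}
    {C : ℝ} (hf : ∀ i, ‖f i‖ ≤ C) : ∃ g, Tendsto f U (𝓝 g) := by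
  obtain ⟨g, -, hg⟩ := (isCompact_closedBall (0 : G) C).ultrafilter_le_nhds (U.map f) <| by
    rw [Ultrafilter.coe_map, le_principal_iff]
    exact mem_map.mpr (univ_mem' fun i => by simpa using hf i)
  exact ⟨g, by rwa [Ultrafilter.coe_map] at hg⟩

theorem Ultrafilter.exists_tendsto_clm₂_of_norm_le [ProperSpace G] (U : Ultrafilter ι)
    (T : ι → E →L[𝕜] F →L[𝕜] G) {C : ℝ} (hT : ∀ i, ‖T i‖ ≤ C) :
    ∃ S : E →L[𝕜] F →L[𝕜] G, ∀ x y, Tendsto (fun i => T i x y) U (𝓝 (S x y)) := by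
  have hTxy : ∀ i x y, ‖T i x y‖ ≤ C * ‖x‖ * ‖y‖ := fun i x y =>
    ((T i).le_opNorm₂ x y).trans (by gcongr; exact hT i)
  choose S hS using fun x y => U.exists_tendsto_of_norm_le (hTxy · x y)
  have hS_eq {x y g} (h : Tendsto (fun i => T i x y) U (𝓝 g)) : S x y = g :=
    tendsto_nhds_unique (hS x y) h
  refine ⟨LinearMap.mkContinuous₂ (LinearMap.mk₂ 𝕜 S ?_ ?_ ?_ ?_) C ?_, hS⟩
  · exact fun x x' y => hS_eq (by simpa using (hS x y).add (hS x' y))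
  · exact fun c x y => hS_eq (by simpa using (hS x y).const_smul c)
  · exact fun x y y' => hS_eq (by simpa using (hS x y).add (hS x y'))
  · exact fun c x y => hS_eq (by simpa using (hS x y).const_smul c)
  · exact fun x y => le_of_tendsto' (hS x y).norm (hTxy · x y)

theorem ContinuousLinearMap.tendsto_apply₂_left (B : E →L[𝕜] F →L[𝕜] G) {l : Filter ι}
    {u : ι → E} {x : E} (hu : Tendsto u l (𝓝 x)) (y : F) :
    Tendsto (fun i => B (u i) y) l (𝓝 (B x y)) :=
  ((B.flip y).continuous.tendsto x).comp hu

end UltrafilterLimit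

section Derivation

variable {A : Type} [NonUnitalNormedRing A] [NormedSpace ℂ A] [IsScalarTower ℂ A A]
  [SMulCommClass ℂ A A] [CompleteSpace A]

theorem isDerivation_iterDual_one_iff {D : A →L[ℂ] A →L[ℂ] ℂ} :
    IsDerivation (iterDual A 1) D ↔ ∀ a b c, D (a * b) c = D b (c * a) + D a (b * c) :=
  forall₂_congr fun _ _ => ContinuousLinearMap.ext_iff

theorem IsApproxInner.restrict_iterDual_one (I : NonUnitalSubalgebra ℂ A) [CompleteSpace I]
    {E : A →L[ℂ] A →L[ℂ] ℂ} {D : I →L[ℂ] I →L[ℂ] ℂ} (hE : IsApproxInner (iterDual A 1) E)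
    (hED : ∀ x y : I, E x y = D x y) : IsApproxInner (iterDual I 1) D := by
  obtain ⟨κ, m, f, hm, hf⟩ := hE
  let restrict : (A →L[ℂ] ℂ) →L[ℂ] I →L[ℂ] ℂ := (compL ℂ I A ℂ).flip I.toSubmodule.subtypeL
  refine ⟨κ, m, fun j => restrict (f j), hm, fun x => ?_⟩
  have h : Tendsto _ m (𝓝 (restrict (E x))) := (restrict.continuous.tendsto _).comp (hf x)
  rw [show restrict (E x) = D x from ContinuousLinearMap.ext (hED x)] at h
  exact h.congr fun j => ContinuousLinearMap.ext fun y => rfl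

end Derivation

section Ideal

variable {A : Type} [NonUnitalNormedRing A] [NormedSpace ℂ A] [IsScalarTower ℂ A A]
  [SMulCommClass ℂ A A] {I : NonUnitalSubalgebra ℂ A}

noncomputable def idealMulLeft (hl : ∀ a x : A, x ∈ I → a * x ∈ I) : A →L[ℂ] I →L[ℂ] I :=
  LinearMap.mkContinuous₂
    (LinearMap.mk₂ ℂ (fun a x => ⟨a * x, hl a x x.2⟩)
      (fun _ _ _ => Subtype.ext (add_mul _ _ _)) (fun _ _ _ => Subtype.ext (smul_mul_assoc _ _ _))
      (fun _ _ _ => Subtype.ext (mul_add _ _ _)) (fun _ _ _ => Subtype.ext (mul_smul_comm _ _ _)))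
    1 fun a x => by rw [one_mul]; exact norm_mul_le a (x : A)

noncomputable def idealMulRight (hr : ∀ a x : A, x ∈ I → x * a ∈ I) : A →L[ℂ] I →L[ℂ] I :=
  LinearMap.mkContinuous₂
    (LinearMap.mk₂ ℂ (fun a x => ⟨x * a, hr a x x.2⟩)
      (fun _ _ _ => Subtype.ext (mul_add _ _ _)) (fun _ _ _ => Subtype.ext (mul_smul_comm _ _ _))
      (fun _ _ _ => Subtype.ext (add_mul _ _ _)) (fun _ _ _ => Subtype.ext (smul_mul_assoc _ _ _)))
    1 fun a x => by rw [one_mul, mul_comm]; exact norm_mul_le (x : A) a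

variable {hl : ∀ a x : A, x ∈ I → a * x ∈ I} {hr : ∀ a x : A, x ∈ I → x * a ∈ I}

@[simp]
theorem coe_idealMulLeft (a : A) (x : I) : (idealMulLeft hl a x : A) = a * x := rfl

@[simp]
theorem coe_idealMulRight (a : A) (x : I) : (idealMulRight hr a x : A) = x * a := rfl

theorem norm_idealMulLeft_flip_le (x : I) : ‖(idealMulLeft hl).flip x‖ ≤ ‖x‖ :=
  opNorm_le_bound _ (norm_nonneg x) fun a => by rw [mul_comm]; exact norm_mul_le a (x : A)

theorem norm_idealMulRight_flip_le (x : I) : ‖(idealMulRight hr).flip x‖ ≤ ‖x‖ :=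
  opNorm_le_bound _ (norm_nonneg x) fun a => norm_mul_le (x : A) a

variable {ι : Type*}

def IsQuasiCentral (l : Filter ι) (ε : ι → I) : Prop :=
  ∀ a : A, Tendsto (fun i => a * ε i - ε i * a) l (𝓝 0)

def IsExtensionAlong (hl : ∀ a x : A, x ∈ I → a * x ∈ I) (l : Filter ι) (ε : ι → I)
    (D : I →L[ℂ] I →L[ℂ] ℂ) (Dt : A →L[ℂ] I →L[ℂ] ℂ) : Prop :=
  ∀ a y, Tendsto (fun k => D (idealMulLeft hl a (ε k)) y) l (𝓝 (Dt a y))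

def IsDualExtensionAlong (hr : ∀ a x : A, x ∈ I → x * a ∈ I) (l : Filter ι) (ε : ι → I)
    (Φ : (I →L[ℂ] ℂ) →L[ℂ] A →L[ℂ] ℂ) : Prop :=
  ∀ φ b, Tendsto (fun i => φ (idealMulRight hr b (ε i))) l (𝓝 (Φ φ b))

variable {l : Filter ι} {ε : ι → I} {D : I →L[ℂ] I →L[ℂ] ℂ} {Dt : A →L[ℂ] I →L[ℂ] ℂ}
  {Φ : (I →L[ℂ] ℂ) →L[ℂ] A →L[ℂ] ℂ}

namespace IsExtensionAlong

theorem apply_coe (hDt : IsExtensionAlong hl l ε D Dt) (hε : (l.map ε).IsApproximateUnit)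
    (x : I) : Dt x = D x := by
  have := hε.neBot.of_map
  ext y
  exact tendsto_nhds_unique (hDt x y)
    (D.tendsto_apply₂_left (tendsto_map'_iff.mp (hε.tendsto_mul_left x)) y)

theorem tendsto_approxUnit_mul (hDt : IsExtensionAlong hl l ε D Dt) (hqc : IsQuasiCentral l ε)
    (a : A) (z : I) : Tendsto (fun k => D (idealMulRight hr a (ε k)) z) l (𝓝 (Dt a z)) := by
  have hcomm : Tendsto (fun k => idealMulRight hr a (ε k) - idealMulLeft hl a (ε k)) l (𝓝 0) := by
    rw [tendsto_subtype_rng]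
    simpa using (hqc a).neg
  simpa using (D.tendsto_apply₂_left hcomm z).add (hDt a z)

theorem apply_idealMulLeft (hDt : IsExtensionAlong hl l ε D Dt)
    (hε : (l.map ε).IsApproximateUnit) (hqc : IsQuasiCentral l ε)
    (hD : ∀ x y z : I, D (x * y) z = D y (z * x) + D x (y * z)) (a : A) (x y : I) :
    D (idealMulLeft hl a x) y = D x (idealMulRight hr a y) + Dt a (x * y) := by
  have := hε.neBot.of_map
  have h_unit : Tendsto (fun m => D (ε m * idealMulLeft hl a x) y) l
      (𝓝 (D (idealMulLeft hl a x) y)) :=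
    D.tendsto_apply₂_left (tendsto_map'_iff.mp (hε.tendsto_mul_right _)) y
  have h_split : ∀ m, D (ε m * idealMulLeft hl a x) y =
      D x (idealMulRight hr a (y * ε m)) + D (idealMulRight hr a (ε m)) (x * y) := fun m => by
    convert hD (idealMulRight hr a (ε m)) x y using 3 <;> ext <;> simp [mul_assoc]
  have h_right : Tendsto (fun m => D x (idealMulRight hr a (y * ε m))) l
      (𝓝 (D x (idealMulRight hr a y))) :=
    ((D x).continuous.tendsto _).comp <| ((idealMulRight hr a).continuous.tendsto y).comp <|
      tendsto_map'_iff.mp (hε.tendsto_mul_left y)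
  refine tendsto_nhds_unique h_unit ?_
  simpa only [h_split] using h_right.add (hDt.tendsto_approxUnit_mul hqc a (x * y))

theorem map_mul_apply (hDt : IsExtensionAlong hl l ε D Dt) (hε : (l.map ε).IsApproximateUnit)
    (hqc : IsQuasiCentral l ε) (hD : ∀ x y z : I, D (x * y) z = D y (z * x) + D x (y * z))
    (a b : A) (y : I) :
    Dt (a * b) y = Dt b (idealMulRight hr a y) + Dt a (idealMulLeft hl b y) := by
  have := hε.neBot.of_map
  have h_split : ∀ k, D (idealMulLeft hl (a * b) (ε k)) y =
      D (idealMulLeft hl b (ε k)) (idealMulRight hr a y) + Dt a (idealMulLeft hl b (ε k * y)) :=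
    fun k => by
      convert hDt.apply_idealMulLeft hε hqc hD a (idealMulLeft hl b (ε k)) y using 3 <;>
        ext <;> simp [mul_assoc]
  have h_left : Tendsto (fun k => Dt a (idealMulLeft hl b (ε k * y))) l
      (𝓝 (Dt a (idealMulLeft hl b y))) :=
    ((Dt a).continuous.tendsto _).comp <| ((idealMulLeft hl b).continuous.tendsto y).comp <|
      tendsto_map'_iff.mp (hε.tendsto_mul_right y)
  refine tendsto_nhds_unique (hDt (a * b) y) ?_
  simpa only [h_split] using (hDt b _).add h_left

end IsExtensionAlong

namespace IsDualExtensionAlong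

theorem apply_coe (hΦ : IsDualExtensionAlong hr l ε Φ) (hε : (l.map ε).IsApproximateUnit)
    (φ : I →L[ℂ] ℂ) (y : I) : Φ φ y = φ y := by
  have := hε.neBot.of_map
  exact tendsto_nhds_unique (hΦ φ y)
    ((φ.continuous.tendsto y).comp (tendsto_map'_iff.mp (hε.tendsto_mul_right y)))

theorem tendsto_mul_approxUnit_mul (hΦ : IsDualExtensionAlong hr l ε Φ)
    (hqc : IsQuasiCentral l ε) (φ : I →L[ℂ] ℂ) (b c : A) :
    Tendsto (fun i => φ (idealMulLeft hl b (idealMulRight hr c (ε i)))) l (𝓝 (Φ φ (b * c))) := by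
  have hcomm : Tendsto (fun i => idealMulLeft hl b (idealMulRight hr c (ε i)) -
      idealMulRight hr (b * c) (ε i)) l (𝓝 0) := by
    rw [tendsto_subtype_rng]
    simpa [sub_mul, mul_assoc] using (hqc b).mul_const c
  simpa using ((φ.continuous.tendsto 0).comp hcomm).add (hΦ φ (b * c))

theorem isDerivation_comp [CompleteSpace A] [l.NeBot] (hΦ : IsDualExtensionAlong hr l ε Φ)
    (hqc : IsQuasiCentral l ε)
    (hDt : ∀ a b y, Dt (a * b) y = Dt b (idealMulRight hr a y) + Dt a (idealMulLeft hl b y)) :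
    IsDerivation (iterDual A 1) (Φ.comp Dt) := by
  rw [isDerivation_iterDual_one_iff]
  intro a b c
  have h_split : ∀ i, Dt (a * b) (idealMulRight hr c (ε i)) =
      Dt b (idealMulRight hr (c * a) (ε i)) + Dt a (idealMulLeft hl b (idealMulRight hr c (ε i))) :=
    fun i => by rw [hDt]; congr 2; ext; simp [mul_assoc]
  refine tendsto_nhds_unique (hΦ (Dt (a * b)) c) ?_
  simpa only [h_split, ContinuousLinearMap.comp_apply] using
    (hΦ (Dt b) (c * a)).add (hΦ.tendsto_mul_approxUnit_mul hqc (Dt a) b c)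

end IsDualExtensionAlong

end Ideal

theorem ideal_approxWeaklyAmenable_of_quasiCentral_bai
    (I : NonUnitalSubalgebra ℂ A)
    [CompleteSpace ↥I]
    (hl : ∀ (a x : A), x ∈ I → a * x ∈ I) (hr : ∀ (a x : A), x ∈ I → x * a ∈ I)
    (ι : Type) (l : Filter ι) (e : ι → A) (C : ℝ) (hne : l.NeBot)
    (he_mem : ∀ i, e i ∈ I) (he_bdd : ∀ i, ‖e i‖ ≤ C)
    (he_bai : ∀ x ∈ I, Tendsto (fun i => e i * x) l (𝓝 x) ∧
      Tendsto (fun i => x * e i) l (𝓝 x))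
    (he_qc : ∀ a : A, Tendsto (fun i => a * e i - e i * a) l (𝓝 0))
    (hA : ApproxWeaklyAmenable A) :
    ApproxWeaklyAmenable ↥I := by
  intro (D : I →L[ℂ] I →L[ℂ] ℂ) hD
  obtain ⟨U, hU⟩ := exists_ultrafilter_le l
  let ε : ι → I := fun i => ⟨e i, he_mem i⟩
  have hε : ((U : Filter ι).map ε).IsApproximateUnit :=
    { tendsto_mul_left x := tendsto_map'_iff.mpr <| tendsto_subtype_rng.mpr <|
        (he_bai x x.2).2.mono_left hU
      tendsto_mul_right x := tendsto_map'_iff.mpr <| tendsto_subtype_rng.mpr <|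
        (he_bai x x.2).1.mono_left hU
      neBot := inferInstance }
  have hqc : IsQuasiCentral (U : Filter ι) ε := fun a => (he_qc a).mono_left hU
  obtain ⟨Dt, hDt⟩ : ∃ Dt, IsExtensionAlong hl U ε D Dt :=
    U.exists_tendsto_clm₂_of_norm_le (fun k => D.comp ((idealMulLeft hl).flip (ε k)))
      (C := ‖D‖ * C) fun k =>
      (D.opNorm_comp_le _).trans (by gcongr; exact (norm_idealMulLeft_flip_le _).trans (he_bdd k))
  obtain ⟨Φ, hΦ⟩ : ∃ Φ, IsDualExtensionAlong hr U ε Φ :=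
    U.exists_tendsto_clm₂_of_norm_le (fun i => (compL ℂ A I ℂ).flip ((idealMulRight hr).flip (ε i)))
      fun i => opNorm_le_bound _ ((norm_nonneg _).trans (he_bdd i)) fun φ =>
        (φ.opNorm_comp_le _).trans <| by
          rw [mul_comm]; gcongr; exact (norm_idealMulRight_flip_le _).trans (he_bdd i)
  have hE := hA _ <| hΦ.isDerivation_comp hqc <|
    hDt.map_mul_apply hε hqc (isDerivation_iterDual_one_iff.mp hD)
  exact hE.restrict_iterDual_one I fun x y =>
    (hΦ.apply_coe hε (Dt x) y).trans (DFunLike.congr_fun (hDt.apply_coe hε x) y)
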